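/- If the Bernstein-Bézout matrix B of p and q has rank n−1 and t_0 is a common root of p and q, then the nullspace of B is exactly the one-dimensional span of the vector (β_0^{(n-1)}(t_0), …, β_{n-1}^{(n-1)}(t_0)). -/

import Mathlib

/-!
Putting `s = t₀` in the Bézoutian identity kills its left-hand side, so
`(t - t₀) ∑ᵢ (B v)ᵢ βᵢ(t) = 0` for `v = (βⱼ(t₀))ⱼ`; since the Bernstein polynomials are linearly
independent, `B v = 0`. The vector `v` is nonzero because the Bernstein basis is a partition of
unity, and rank `n - 1` leaves a one-dimensional nullspace.
-/

/-- Bernstein basis polynomial `β_i^{(m)}(t) = C(m,i) (1-t)^(m-i) t^i`, as a real function. -/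
noncomputable def bern (m i : ℕ) (t : ℝ) : ℝ := (m.choose i : ℝ) * (1 - t) ^ (m - i) * t ^ i

open Polynomial Module Matrix

theorem bern_eq_eval_bernsteinPolynomial (m i : ℕ) (t : ℝ) :
    bern m i t = (bernsteinPolynomial ℝ m i).eval t := by
  simp only [bern, bernsteinPolynomial, eval_mul, eval_pow, eval_sub, eval_one, eval_X,
    eval_natCast]
  ring

theorem bernsteinPolynomial.natDegree_le {R : Type*} [CommRing R] (n ν : ℕ) :
    (bernsteinPolynomial R n ν).natDegree ≤ n := by
  rcases le_or_gt ν n with h | h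
  · unfold bernsteinPolynomial
    compute_degree
    omega
  · simp [bernsteinPolynomial.eq_zero_of_lt R h]

theorem bernsteinPolynomial.linearIndependent_real (n : ℕ) :
    LinearIndependent ℝ fun ν : Fin (n + 1) => bernsteinPolynomial ℝ n ν := by
  -- Mathlib proves independence over `ℚ`; that of the coefficient vectors in `ℚ^(n+1)`
  -- survives extension of scalars to `ℝ`.
  let coeffs (K : Type) [Field K] : K[X] →ₗ[K] Fin (n + 1) → K :=
    LinearMap.pi fun k => lcoeff K k
  have hℚ : LinearIndependent ℚ fun ν : Fin (n + 1) => coeffs ℚ (bernsteinPolynomial ℚ n ν) := by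
    refine (bernsteinPolynomial.linearIndependent n).map ?_
    rw [Submodule.disjoint_def]
    intro p hp hker
    have hdeg : p ∈ degreeLE ℚ n := by
      refine Submodule.span_le.mpr ?_ hp
      rintro _ ⟨ν, rfl⟩
      exact mem_degreeLE.mpr (degree_le_of_natDegree_le (natDegree_le n ν))
    ext k
    rcases le_or_gt k n with hk | hk
    · exact congr_fun hker ⟨k, Nat.lt_succ_of_le hk⟩
    · exact coeff_eq_zero_of_degree_lt ((mem_degreeLE.mp hdeg).trans_lt (by exact_mod_cast hk))
  have hℝ := linearIndependent_algebraMap_comp_iff (S := ℝ) |>.mpr hℚ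
  have hcoeffs : (coeffs ℝ ∘ fun ν : Fin (n + 1) => bernsteinPolynomial ℝ n ν) =
      fun ν : Fin (n + 1) => algebraMap ℚ ℝ ∘ coeffs ℚ (bernsteinPolynomial ℚ n ν) := by
    ext ν k
    simp only [coeffs, Function.comp_apply, LinearMap.pi_apply, lcoeff_apply,
      ← bernsteinPolynomial.map (algebraMap ℚ ℝ), coeff_map]
  exact LinearIndependent.of_comp (coeffs ℝ) (hcoeffs ▸ hℝ)

theorem sum_bern_eq_one (m : ℕ) (t : ℝ) : ∑ i : Fin (m + 1), bern m i t = 1 := by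
  simp_rw [bern_eq_eval_bernsteinPolynomial, ← eval_finsetSum,
    Fin.sum_univ_eq_sum_range (fun i => bernsteinPolynomial ℝ m i), bernsteinPolynomial.sum,
    eval_one]

theorem bern_vec_ne_zero (m : ℕ) (t : ℝ) : (fun i : Fin (m + 1) => bern m i t) ≠ 0 := by
  intro h
  simpa [h] using sum_bern_eq_one m t

theorem eq_zero_of_sum_mul_bern_eq_zero {m : ℕ} {s : Set ℝ} (hs : s.Infinite)
    (c : Fin (m + 1) → ℝ) (h : ∀ t ∈ s, ∑ i, c i * bern m i t = 0) : c = 0 := by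
  have hP : ∑ i, c i • bernsteinPolynomial ℝ m i = 0 := by
    refine eq_zero_of_infinite_isRoot _ (hs.mono fun t ht => ?_)
    simpa [eval_finsetSum, bern_eq_eval_bernsteinPolynomial] using h t ht
  funext i
  exact Fintype.linearIndependent_iff.mp (bernsteinPolynomial.linearIndependent_real m) c hP i

theorem Matrix.rank_add_finrank_ker_mulVecLin {K m n : Type*} [Field K] [Fintype n]
    (A : Matrix m n K) : A.rank + finrank K (LinearMap.ker A.mulVecLin) = Fintype.card n := by
  rw [Matrix.rank, LinearMap.finrank_range_add_finrank_ker, Module.finrank_fintype_fun_eq_card]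

theorem mulVec_bern_eq_zero_of_isRoot {m : ℕ} {p q : ℝ[X]}
    {B : Matrix (Fin (m + 1)) (Fin (m + 1)) ℝ}
    (hB : ∀ t s : ℝ, p.eval t * q.eval s - p.eval s * q.eval t
      = (t - s) * ∑ i : Fin (m + 1), ∑ j : Fin (m + 1), B i j * bern m i t * bern m j s)
    {t₀ : ℝ} (hp : p.eval t₀ = 0) (hq : q.eval t₀ = 0) :
    B *ᵥ (fun j : Fin (m + 1) => bern m j t₀) = 0 := by
  refine eq_zero_of_sum_mul_bern_eq_zero (Set.finite_singleton t₀).infinite_compl _ fun t ht => ?_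
  have hBt := hB t t₀
  simp only [hp, hq, mul_zero, zero_mul, sub_zero] at hBt
  have hsum : ∑ i, (B *ᵥ fun j : Fin (m + 1) => bern m j t₀) i * bern m i t
      = ∑ i : Fin (m + 1), ∑ j : Fin (m + 1), B i j * bern m i t * bern m j t₀ := by
    simp only [Matrix.mulVec, dotProduct, Finset.sum_mul]
    exact Finset.sum_congr rfl fun i _ => Finset.sum_congr rfl fun j _ => by ring
  rw [hsum]
  exact (mul_eq_zero.mp hBt.symm).resolve_left (sub_ne_zero.mpr ht)

theorem nullspace_eq_span_general (n : ℕ) (hn : 1 ≤ n) (p q : Polynomial ℝ)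
    (B : Matrix (Fin n) (Fin n) ℝ)
    (hB : ∀ t s : ℝ, p.eval t * q.eval s - p.eval s * q.eval t
      = (t - s) * ∑ i : Fin n, ∑ j : Fin n, B i j * bern (n - 1) i t * bern (n - 1) j s)
    (hrank : B.rank = n - 1)
    (t₀ : ℝ) (hpt : p.eval t₀ = 0) (hqt : q.eval t₀ = 0) :
    LinearMap.ker B.mulVecLin
      = Submodule.span ℝ {fun i : Fin n => bern (n - 1) (i : ℕ) t₀} := by
  obtain ⟨m, rfl⟩ : ∃ m, n = m + 1 := ⟨n - 1, by omega⟩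
  rw [Nat.add_sub_cancel] at hB hrank ⊢
  have hnullity : finrank ℝ (LinearMap.ker B.mulVecLin) = 1 := by
    have := B.rank_add_finrank_ker_mulVecLin
    rw [hrank, Fintype.card_fin] at this
    omega
  refine eq_span_singleton_of_mem_of_finrank_eq_one hnullity ?_ (bern_vec_ne_zero m t₀)
  exact LinearMap.mem_ker.mpr (mulVec_bern_eq_zero_of_isRoot hB hpt hqt)

/-- If the Bernstein–Bézout matrix `B` has rank `n−1` and `t₀` is a common root of `p` and `q`,
the nullspace of `B` is exactly the span of `(β_0^{(n-1)}(t₀), …, β_{n-1}^{(n-1)}(t₀))`. -/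
theorem nullspace_eq_span (n : ℕ) (hn : 1 ≤ n) (p q : Polynomial ℝ)
    (hp : p.natDegree ≤ n) (hq : q.natDegree ≤ n)
    (B : Matrix (Fin n) (Fin n) ℝ)
    (hB : ∀ t s : ℝ, p.eval t * q.eval s - p.eval s * q.eval t
      = (t - s) * ∑ i : Fin n, ∑ j : Fin n, B i j * bern (n - 1) i t * bern (n - 1) j s)
    (hrank : B.rank = n - 1)
    (t₀ : ℝ) (hpt : p.eval t₀ = 0) (hqt : q.eval t₀ = 0) :
    LinearMap.ker B.mulVecLin
      = Submodule.span ℝ {fun i : Fin n => bern (n - 1) (i : ℕ) t₀} :=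
  nullspace_eq_span_general n hn p q B hB hrank t₀ hpt hqt
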